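/- Let α = 2√3 − 3 and γ = (3−√3)/2. For all real x₁, x₂ ≥ 0 with x₁ + x₂ = 1 and x₂ < 1: (i) x₁²x₂ / (2(1 − x₂³)) ≤ α/6; and (ii) if moreover x₁ ∈ [1/2, 1], then (1/2)·x₁²x₂ + (α/6)·x₂³ ≤ α/6 − (1/4)·(x₁ − γ)². -/

import Mathlib

open scoped Classical

noncomputable section

/-- The constant `α = 2√3 − 3`. -/
def alphaC : ℝ := 2 * Real.sqrt 3 - 3

/-- The constant `γ = (3 − √3)/2`. -/
def gammaC : ℝ := (3 - Real.sqrt 3) / 2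

/-! Both inequalities reduce to polynomial identities whose slack is a square times a nonnegative
factor. Cancelling `x₁` from `1 - x₂³ = x₁ (1 + x₂ + x₂²)`, (i) says that `t (1 - t) / (1 + t + t²)`
never exceeds `α/3`; the quadratic `α/3 (1 + t + t²) - t (1 - t)` has a double root at `(√3 - 1)/2`.
In (ii) the slack is a cubic in `x₁` with a double root at `γ` and a simple root at `√3/4 < 1/2`. -/

open Real

theorem sqrt_three_lt_two : √3 < 2 :=
  (sqrt_lt' two_pos).mpr (by norm_num)

theorem mul_one_sub_le_alphaC_div_three_mul (t : ℝ) :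
    t * (1 - t) ≤ alphaC / 3 * (1 + t + t ^ 2) := by
  have h3 : √3 ^ 2 = 3 := sq_sqrt (by norm_num)
  have key : alphaC / 3 * (1 + t + t ^ 2) - t * (1 - t) = √3 / 6 * (2 * t - √3 + 1) ^ 2 := by
    rw [alphaC]
    linear_combination (2 * t / 3 + 1 / 3 - √3 / 6) * h3
  exact sub_nonneg.mp (key ▸ by positivity)

theorem sq_mul_one_sub_div_le_alphaC_div_six {x : ℝ} (hx : 0 < x) :
    x ^ 2 * (1 - x) / (2 * (1 - (1 - x) ^ 3)) ≤ alphaC / 6 := by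
  have hfactor : 1 - (1 - x) ^ 3 = x * (1 + (1 - x) + (1 - x) ^ 2) := by ring
  have hq : 0 < 1 + (1 - x) + (1 - x) ^ 2 := by nlinarith [sq_nonneg (3 / 2 - x)]
  rw [div_le_iff₀ (by rw [hfactor]; positivity), hfactor]
  nlinarith [mul_le_mul_of_nonneg_left (mul_one_sub_le_alphaC_div_three_mul (1 - x)) hx.le]

theorem half_sq_mul_add_alphaC_mul_le {x : ℝ} (hx : √3 / 4 ≤ x) :
    1 / 2 * x ^ 2 * (1 - x) + alphaC / 6 * (1 - x) ^ 3 ≤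
      alphaC / 6 - 1 / 4 * (x - gammaC) ^ 2 := by
  have h3 : √3 ^ 2 = 3 := sq_sqrt (by norm_num)
  have key : alphaC / 6 - 1 / 4 * (x - gammaC) ^ 2 -
      (1 / 2 * x ^ 2 * (1 - x) + alphaC / 6 * (1 - x) ^ 3) =
      √3 / 3 * (x - gammaC) ^ 2 * (x - √3 / 4) := by
    rw [alphaC, gammaC]
    linear_combination (1 / 4 - √3 / 8 - x ^ 2 / 4 + x / 4 + (√3 ^ 2 - 3) / 48) * h3
  exact sub_nonneg.mp (key ▸ mul_nonneg (by positivity) (sub_nonneg.mpr hx))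

theorem fact_inequalities_general (x₁ x₂ : ℝ)
    (hsum : x₁ + x₂ = 1) (hlt : x₂ < 1) :
    x₁ ^ 2 * x₂ / (2 * (1 - x₂ ^ 3)) ≤ alphaC / 6 ∧
    (x₁ ∈ Set.Icc (1 / 2 : ℝ) 1 →
      (1 / 2) * x₁ ^ 2 * x₂ + (alphaC / 6) * x₂ ^ 3 ≤
        alphaC / 6 - (1 / 4) * (x₁ - gammaC) ^ 2) := by
  obtain rfl : x₂ = 1 - x₁ := by linarith
  refine ⟨sq_mul_one_sub_div_le_alphaC_div_six (by linarith), fun hx => ?_⟩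
  exact half_sq_mul_add_alphaC_mul_le (by linarith [hx.1, sqrt_three_lt_two])

/-- **Fact (elementary inequalities for `α = 2√3 − 3` and `γ = (3−√3)/2`).**
For `x₁, x₂ ≥ 0` with `x₁ + x₂ = 1` and `x₂ < 1`:
(i) `x₁²x₂ / (2(1 − x₂³)) ≤ α/6`; and
(ii) if `x₁ ∈ [1/2, 1]` then `x₁²x₂/2 + (α/6)x₂³ ≤ α/6 − (x₁ − γ)²/4`. -/
theorem fact_inequalities (x₁ x₂ : ℝ) (h₁ : 0 ≤ x₁) (h₂ : 0 ≤ x₂)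
    (hsum : x₁ + x₂ = 1) (hlt : x₂ < 1) :
    x₁ ^ 2 * x₂ / (2 * (1 - x₂ ^ 3)) ≤ alphaC / 6 ∧
    (x₁ ∈ Set.Icc (1 / 2 : ℝ) 1 →
      (1 / 2) * x₁ ^ 2 * x₂ + (alphaC / 6) * x₂ ^ 3 ≤
        alphaC / 6 - (1 / 4) * (x₁ - gammaC) ^ 2) :=
  fact_inequalities_general x₁ x₂ hsum hlt
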